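/- arXiv:1505.04140 — 8 statements merged into one kernel-verified Lean document; each statement's English description precedes it below -/
import Mathlib

section
/- Row orthogonality of the finite-field cas carriers: for all k, l ∈ ZMod N, the sum Σ_{i ∈ ZMod N} cas_k(i) · cas_l(i) equals (N : F) (the image of N in F) if k = l, and equals 0 if k ≠ l. -/
/-!
Writing `ψ i = ζ ^ i.val` for the additive character of `ZMod N` attached to the primitive
`N`-th root of unity `ζ`, the kernel `cas_k(i)` is `((1 - j) ψ(ki) + (1 + j) ψ(-ki)) / 2`.
Since `(1 - j)² = -2j`, `(1 + j)² = 2j` and `(1 - j)(1 + j) = 2`, the product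
`cas_k(i) cas_l(i)` is `(ψ((k - l)i) + ψ((l - k)i) + j (ψ(-(k + l)i) - ψ((k + l)i))) / 2`.
Summing over `i`, character orthogonality turns each `ψ(m i)` into `N` if `m = 0` and `0`
otherwise; the two `j`-terms then cancel and the other two give `N` exactly when `k = l`.
-/

/-- The finite-field `cas` (cos-and-sin) carrier function over a field `F`:
`cas_k(i) = ((1 - j)·ζ^{ki} + (1 + j)·ζ^{-ki})/2`, where the exponents are taken
through representatives of `k·i` in `ZMod N`. -/
def cas {F : Type*} [Field F] {N : ℕ} (j ζ : F) (k i : ZMod N) : F :=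
  ((1 - j) * ζ ^ (k * i).val + (1 + j) * ζ ^ (-(k * i)).val) / 2

namespace AddChar

variable {A F : Type*} [AddCommGroup A] [Field F]

def casChar (j : F) (ψ : AddChar A F) (a : A) : F :=
  ((1 - j) * ψ a + (1 + j) * ψ (-a)) / 2

theorem casChar_mul_casChar {j : F} (hj : j ^ 2 = -1) (h2 : (2 : F) ≠ 0)
    (ψ : AddChar A F) (a b : A) :
    casChar j ψ a * casChar j ψ b =
      (ψ (a - b) + ψ (b - a) + j * (ψ (-(a + b)) - ψ (a + b))) / 2 := by
  simp only [casChar, sub_eq_add_neg, neg_add, map_add_eq_mul]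
  field_simp
  linear_combination (ψ a * ψ b - ψ a * ψ (-b) - ψ (-a) * ψ b + ψ (-a) * ψ (-b)) * hj

theorem sum_casChar_mul_casChar {R : Type*} [CommRing R] [Fintype R] [DecidableEq R]
    {j : F} (hj : j ^ 2 = -1) (h2 : (2 : F) ≠ 0) {ψ : AddChar R F} (hψ : IsPrimitive ψ)
    (k l : R) :
    ∑ i, casChar j ψ (k * i) * casChar j ψ (l * i) =
      if k = l then (Fintype.card R : F) else 0 := by
  have orthogonality (m : R) :
      ∑ i, ψ (m * i) = if m = 0 then (Fintype.card R : F) else 0 := by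
    simpa only [mul_comm m, Nat.cast_ite, Nat.cast_zero] using sum_mulShift m hψ
  simp only [casChar_mul_casChar hj h2, ← sub_mul, ← add_mul, ← neg_mul, ← Finset.sum_div,
    Finset.sum_add_distrib, ← Finset.mul_sum, Finset.sum_sub_distrib, orthogonality,
    neg_eq_zero, sub_eq_zero, eq_comm (a := l), sub_self, mul_zero, add_zero]
  split_ifs <;> field_simp <;> ring

end AddChar

open AddChar

/-- Row orthogonality of the finite-field cas carriers. -/
theorem cas_row_orthogonality {F : Type*} [Field F] (N : ℕ) [NeZero N]
    (j ζ : F) (h2 : IsUnit (2 : F)) (hj : j ^ 2 = -1) (hζ : orderOf ζ = N)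
    (k l : ZMod N) :
    ∑ i : ZMod N, cas j ζ k i * cas j ζ l i = if k = l then (N : F) else 0 := by
  have hprim : IsPrimitiveRoot ζ N := hζ ▸ IsPrimitiveRoot.orderOf ζ
  have hψ := zmodChar_primitive_of_primitive_root N hprim
  exact (sum_casChar_mul_casChar hj h2.ne_zero hψ k l).trans (by rw [ZMod.card])
end

section
/- Column orthogonality of the finite-field cas carriers: for all i, i' ∈ ZMod N, the sum Σ_{k ∈ ZMod N} cas_k(i) · cas_k(i') equals (N : F) (the image of N in F) if i = i', and equals 0 if i ≠ i'. -/
namespace AddChar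

variable {R F : Type*} [Field F]

def cas [AddGroup R] (ψ : AddChar R F) (j : F) (x : R) : F :=
  ((1 - j) * ψ x + (1 + j) * ψ (-x)) / 2

/-- Since `(1 - j)² = -2j`, `(1 + j)² = 2j` and `(1 - j)(1 + j) = 2`, the cross terms pair up
into characters at `x - y` and `y - x`. -/
theorem cas_mul_cas [AddCommGroup R] (ψ : AddChar R F) {j : F} (h2 : (2 : F) ≠ 0)
    (hj : j ^ 2 = -1) (x y : R) :
    ψ.cas j x * ψ.cas j y =
      (j * (ψ (-(x + y)) - ψ (x + y)) + ψ (x - y) + ψ (y - x)) / 2 := by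
  simp only [cas, sub_eq_add_neg, neg_add, map_add_eq_mul]
  field_simp
  linear_combination (ψ x * ψ y - ψ x * ψ (-y) - ψ (-x) * ψ y + ψ (-x) * ψ (-y)) * hj

theorem sum_cas_mul_cas [CommRing R] [Fintype R] [DecidableEq R] {ψ : AddChar R F}
    (hψ : ψ.IsPrimitive) {j : F} (h2 : (2 : F) ≠ 0) (hj : j ^ 2 = -1) (i i' : R) :
    ∑ k, ψ.cas j (k * i) * ψ.cas j (k * i') = if i = i' then (Fintype.card R : F) else 0 := by
  have hdistrib : ∀ k : R, k * i + k * i' = k * (i + i') ∧ k * i - k * i' = k * (i - i') ∧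
      k * i' - k * i = k * (i' - i) ∧ -(k * (i + i')) = k * -(i + i') :=
    fun k => ⟨by ring, by ring, by ring, by ring⟩
  simp only [ψ.cas_mul_cas h2 hj, hdistrib, ← Finset.sum_div, Finset.sum_add_distrib,
    ← Finset.mul_sum, Finset.sum_sub_distrib, sum_mulShift _ hψ, neg_eq_zero, sub_eq_zero,
    eq_comm (a := i')]
  split_ifs <;> field_simp <;> ring

end AddChar

/-- Column orthogonality of the finite-field cas carriers. -/
theorem cas_column_orthogonality {F : Type*} [Field F] (N : ℕ) [NeZero N]
    (j ζ : F) (h2 : IsUnit (2 : F)) (hj : j ^ 2 = -1) (hζ : orderOf ζ = N)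
    (i i' : ZMod N) :
    ∑ k : ZMod N, cas j ζ k i * cas j ζ k i' = if i = i' then (N : F) else 0 := by
  have hprim : IsPrimitiveRoot ζ N := hζ ▸ IsPrimitiveRoot.orderOf ζ
  have hψ := AddChar.zmodChar_primitive_of_primitive_root N hprim
  have hcas : ∀ k i : ZMod N,
      cas j ζ k i = (AddChar.zmodChar N hprim.pow_eq_one).cas j (k * i) := fun _ _ => rfl
  simpa only [hcas, ZMod.card] using AddChar.sum_cas_mul_cas hψ h2.ne_zero hj i i'
end

section
/- The finite-field Hartley transform is self-inverse up to the factor N (so the demultiplexer is the same transform as the multiplexer): if (N : F) is invertible in F and V is the FFHT of v, then for every i ∈ ZMod N one has v_i = (N : F)⁻¹ · Σ_{k ∈ ZMod N} V_k · cas_k(i). -/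
/-! Since `ζ` is a primitive `N`-th root of unity, `cas_k(i) = a ψ(ki) + b ψ(-ki)` for the primitive
additive character `ψ = ζ^(·)` of `ZMod N` and `a = (1 - j)/2`, `b = (1 + j)/2`. Expanding
`cas_k(m) cas_k(i)` and summing over `k` with the orthogonality of `ψ`, the terms in `ψ(±k(m + i))`
carry the coefficient `a² + b² = 0` and cancel, while those in `ψ(±k(m - i))` carry `2ab = 1`.
So the columns of `(cas_k(i))` are orthogonal, each of squared length `N`. -/

theorem sum_kernel_mul_kernel_eq_ite_of_isPrimitive {R C : Type*} [CommRing R] [Fintype R]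
    [DecidableEq R] [CommRing C] [IsDomain C] {ψ : AddChar R C} (hψ : ψ.IsPrimitive)
    {a b : C} (hsq : a ^ 2 + b ^ 2 = 0) (hab : 2 * a * b = 1) (m i : R) :
    ∑ k, (a * ψ (k * m) + b * ψ (-(k * m))) * (a * ψ (k * i) + b * ψ (-(k * i))) =
      if m = i then (Fintype.card R : C) else 0 := by
  have expand : ∀ k, (a * ψ (k * m) + b * ψ (-(k * m))) * (a * ψ (k * i) + b * ψ (-(k * i))) =
      a ^ 2 * ψ (k * (m + i)) + a * b * ψ (k * (m - i)) + a * b * ψ (k * (i - m)) +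
        b ^ 2 * ψ (k * -(m + i)) := by
    intro k
    simp only [mul_add, mul_neg, neg_add, sub_eq_add_neg, AddChar.map_add_eq_mul]
    ring
  simp only [expand, Finset.sum_add_distrib, ← Finset.mul_sum, AddChar.sum_mulShift _ hψ,
    Nat.cast_ite, Nat.cast_zero, neg_eq_zero, sub_eq_zero, eq_comm (a := i)]
  linear_combination (if m + i = 0 then (Fintype.card R : C) else 0) * hsq +
    (if m = i then (Fintype.card R : C) else 0) * hab

theorem sum_sum_mul_kernel_mul_kernel_of_orthogonal {ι C : Type*} [Fintype ι] [DecidableEq ι]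
    [CommSemiring C] {c : ι → ι → C} {n : C}
    (hc : ∀ m i, ∑ k, c k m * c k i = if m = i then n else 0)
    (v : ι → C) (i : ι) :
    ∑ k, (∑ m, v m * c k m) * c k i = n * v i := by
  simp only [Finset.sum_mul, mul_assoc]
  rw [Finset.sum_comm]
  simp only [← Finset.mul_sum, hc, mul_ite, mul_zero, Finset.sum_ite_eq', Finset.mem_univ, if_true]
  exact mul_comm _ _

theorem cas_eq_zmodChar {F : Type*} [Field F] {N : ℕ} [NeZero N] {ζ : F} (hζ : ζ ^ N = 1)
    (j : F) (k i : ZMod N) :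
    cas j ζ k i = (1 - j) / 2 * AddChar.zmodChar N hζ (k * i) +
      (1 + j) / 2 * AddChar.zmodChar N hζ (-(k * i)) := by
  simp only [cas, AddChar.zmodChar_apply]
  ring

/-- The finite-field Hartley transform is self-inverse up to the factor `N`:
if `V` is the FFHT of `v` and `(N : F)` is invertible, then
`v i = (N : F)⁻¹ · Σ_k V k · cas_k(i)`. -/
theorem ffht_self_inverse {F : Type*} [Field F] (N : ℕ) [NeZero N]
    (j ζ : F) (h2 : IsUnit (2 : F)) (hj : j ^ 2 = -1) (hζ : orderOf ζ = N)
    (hN : IsUnit (N : F)) (v V : ZMod N → F)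
    (hV : ∀ k : ZMod N, V k = ∑ i : ZMod N, v i * cas j ζ k i)
    (i : ZMod N) :
    v i = (N : F)⁻¹ * ∑ k : ZMod N, V k * cas j ζ k i := by
  have hζN : ζ ^ N = 1 := hζ ▸ pow_orderOf_eq_one ζ
  have hψ : (AddChar.zmodChar N hζN).IsPrimitive :=
    AddChar.zmodChar_primitive_of_primitive_root N (hζ ▸ IsPrimitiveRoot.orderOf ζ)
  have h2ne : (2 : F) ≠ 0 := h2.ne_zero
  have hsq : ((1 - j) / 2) ^ 2 + ((1 + j) / 2) ^ 2 = 0 := by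
    field_simp
    linear_combination 2 * hj
  have hab : 2 * ((1 - j) / 2) * ((1 + j) / 2) = 1 := by
    field_simp
    linear_combination -hj
  have horth (m i : ZMod N) : ∑ k, cas j ζ k m * cas j ζ k i = if m = i then (N : F) else 0 := by
    simp only [cas_eq_zmodChar hζN]
    rw [sum_kernel_mul_kernel_eq_ite_of_isPrimitive hψ hsq hab, ZMod.card]
  simp only [hV, sum_sum_mul_kernel_mul_kernel_of_orthogonal horth, inv_mul_cancel_left₀ hN.ne_zero]
end

section
/- Parseval identity for the finite-field Hartley transform (the carriers all have the same energy and the transform preserves correlations up to the factor N): if V and W are the FFHTs of v and w respectively, then Σ_{k ∈ ZMod N} V_k · W_k = (N : F) · Σ_{i ∈ ZMod N} v_i · w_i. -/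
/-!
Writing `ψ(x) = ζ^x` for the additive character of `ZMod N` defined by `ζ`, the carrier is
`cas_k(i) = a ψ(ki) + b ψ(-ki)` with `a = (1 - j)/2`, `b = (1 + j)/2`. Expanding
`cas_k(i) cas_k(i')` and summing over `k` with the orthogonality of characters gives
`N ((a² + b²) [i + i' = 0] + 2ab [i = i'])`, and `j² = -1` makes `a² + b² = 0`, `2ab = 1`.
So the carriers form an orthogonal matrix up to the factor `N`, which is Parseval's identity.
-/

open Matrix

theorem Matrix.mulVec_dotProduct_mulVec_of_transpose_mul_self_eq_smul_one {m n α : Type*}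
    [Fintype m] [Fintype n] [DecidableEq n] [CommSemiring α] {K : Matrix m n α} {c : α}
    (hK : Kᵀ * K = c • 1) (v w : n → α) : K *ᵥ v ⬝ᵥ K *ᵥ w = c * (v ⬝ᵥ w) := by
  rw [← vecMul_transpose, dotProduct_mulVec, vecMul_vecMul, hK, vecMul_smul, vecMul_one,
    smul_dotProduct, smul_eq_mul]

namespace AddChar

variable {R F : Type*} [CommRing R] [CommRing F]

def hartleyMatrix (ψ : AddChar R F) (a b : F) : Matrix R R F :=
  Matrix.of fun k i => a * ψ (k * i) + b * ψ (-(k * i))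

theorem hartleyMatrix_apply_mul_apply (ψ : AddChar R F) (a b : F) (k i i' : R) :
    hartleyMatrix ψ a b k i * hartleyMatrix ψ a b k i' =
      a ^ 2 * ψ (k * (i + i')) + b ^ 2 * ψ (k * -(i + i')) +
        a * b * (ψ (k * (i - i')) + ψ (k * (i' - i))) := by
  have hmul : ∀ s t : R, ψ s * ψ t = ψ (s + t) := fun s t => (map_add_eq_mul ψ s t).symm
  calc hartleyMatrix ψ a b k i * hartleyMatrix ψ a b k i'
      = a ^ 2 * (ψ (k * i) * ψ (k * i')) + b ^ 2 * (ψ (-(k * i)) * ψ (-(k * i'))) +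
          a * b * (ψ (k * i) * ψ (-(k * i')) + ψ (-(k * i)) * ψ (k * i')) := by
        simp only [hartleyMatrix, of_apply]; ring
    _ = _ := by simp only [hmul]; ring_nf

variable [Fintype R] [DecidableEq R] [IsDomain F]

theorem hartleyMatrix_transpose_mul_self {ψ : AddChar R F} (hψ : ψ.IsPrimitive) {a b : F}
    (hsq : a ^ 2 + b ^ 2 = 0) (hprod : 2 * a * b = 1) :
    (hartleyMatrix ψ a b)ᵀ * hartleyMatrix ψ a b = (Fintype.card R : F) • 1 := by
  ext i i'
  rw [Matrix.mul_apply, Matrix.smul_apply, Matrix.one_apply, smul_eq_mul, mul_ite, mul_one,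
    mul_zero]
  simp only [transpose_apply, hartleyMatrix_apply_mul_apply, Finset.sum_add_distrib,
    ← Finset.mul_sum, sum_mulShift _ hψ, neg_eq_zero, sub_eq_zero, eq_comm (a := i'),
    Nat.cast_ite, Nat.cast_zero]
  calc _ = (a ^ 2 + b ^ 2) * (if i + i' = 0 then (Fintype.card R : F) else 0) +
        2 * a * b * (if i = i' then (Fintype.card R : F) else 0) := by ring
    _ = _ := by rw [hsq, hprod]; simp

end AddChar

theorem cas_eq_hartleyMatrix {F : Type*} [Field F] {N : ℕ} [NeZero N] (j : F) {ζ : F}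
    (hζ : ζ ^ N = 1) (k i : ZMod N) :
    cas j ζ k i = (AddChar.zmodChar N hζ).hartleyMatrix ((1 - j) / 2) ((1 + j) / 2) k i := by
  simp only [cas, AddChar.hartleyMatrix, of_apply, AddChar.zmodChar_apply]
  ring

/-- Parseval identity for the finite-field Hartley transform: if `V`, `W` are the
FFHTs of `v`, `w`, then `Σ_k V k · W k = (N : F) · Σ_i v i · w i`. -/
theorem ffht_parseval {F : Type*} [Field F] (N : ℕ) [NeZero N]
    (j ζ : F) (h2 : IsUnit (2 : F)) (hj : j ^ 2 = -1) (hζ : orderOf ζ = N)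
    (v w V W : ZMod N → F)
    (hV : ∀ k : ZMod N, V k = ∑ i : ZMod N, v i * cas j ζ k i)
    (hW : ∀ k : ZMod N, W k = ∑ i : ZMod N, w i * cas j ζ k i) :
    ∑ k : ZMod N, V k * W k = (N : F) * ∑ i : ZMod N, v i * w i := by
  have hroot : IsPrimitiveRoot ζ N := hζ ▸ IsPrimitiveRoot.orderOf ζ
  set K := (AddChar.zmodChar N hroot.pow_eq_one).hartleyMatrix ((1 - j) / 2) ((1 + j) / 2)
  have hK : Kᵀ * K = (N : F) • 1 := by
    have h2ne : (2 : F) ≠ 0 := h2.ne_zero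
    rw [AddChar.hartleyMatrix_transpose_mul_self
      (AddChar.zmodChar_primitive_of_primitive_root N hroot), ZMod.card]
    · field_simp
      linear_combination 2 * hj
    · field_simp
      linear_combination -hj
  have hmulVec : ∀ u U : ZMod N → F, (∀ k, U k = ∑ i, u i * cas j ζ k i) → U = K *ᵥ u :=
    fun u U hU => funext fun k => by
      simp only [hU, mulVec, dotProduct, cas_eq_hartleyMatrix j hroot.pow_eq_one, mul_comm, K]
  rw [hmulVec v V hV, hmulVec w W hW]
  exact mulVec_dotProduct_mulVec_of_transpose_mul_self_eq_smul_one hK v w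
end

section
/- Frobenius conjugacy symmetry of the finite-field Hartley transform: assume F has characteristic p (p an odd prime), assume j^p = −j, and let v : ZMod N → F satisfy v_i^p = v_i for all i (i.e., v takes values in the prime field GF(p)). If V is the FFHT of v, then for every k ∈ ZMod N one has (V_k)^p = V_{−p·k}, where −p·k is computed in ZMod N. -/
theorem pow_val_natCast_mul {G : Type*} [Monoid G] {N : ℕ} [NeZero N] {ζ : G}
    (hζ : orderOf ζ = N) (n : ℕ) (a : ZMod N) :
    ζ ^ ((n : ZMod N) * a).val = (ζ ^ a.val) ^ n := by
  have hval : ((n : ZMod N) * a).val = a.val * n % orderOf ζ := by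
    rw [hζ, ← ZMod.val_natCast, Nat.cast_mul, ZMod.natCast_zmod_val, mul_comm]
  rw [hval, pow_mod_orderOf, pow_mul]

/- Frobenius swaps `1 - j` and `1 + j` and sends `ζ ^ m` to `ζ ^ (p * m)`, so the two terms of
`cas` trade places; that is the same as replacing `k` by `-(p * k)`. -/
theorem cas_pow_char {F : Type*} [Field F] (p : ℕ) [Fact p.Prime] [CharP F p] {N : ℕ} [NeZero N]
    {j ζ : F} (hjp : j ^ p = -j) (hζ : orderOf ζ = N) (k i : ZMod N) :
    cas j ζ k i ^ p = cas j ζ (-((p : ZMod N) * k)) i := by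
  have hneg : -(-((p : ZMod N) * k) * i) = (p : ZMod N) * (k * i) := by ring
  have hpos : -((p : ZMod N) * k) * i = (p : ZMod N) * -(k * i) := by ring
  simp only [cas, ← frobenius_def, map_div₀, map_add, map_mul, map_sub, map_one, map_ofNat]
  rw [hneg, hpos, pow_val_natCast_mul hζ, pow_val_natCast_mul hζ]
  simp only [frobenius_def, hjp]
  ring

theorem ffht_frobenius_symmetry_general {F : Type*} [Field F] (p N : ℕ) [Fact p.Prime]
    [CharP F p] [NeZero N]
    (j ζ : F) (hjp : j ^ p = -j)
    (hζ : orderOf ζ = N) (v V : ZMod N → F)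
    (hv : ∀ i : ZMod N, v i ^ p = v i)
    (hV : ∀ k : ZMod N, V k = ∑ i : ZMod N, v i * cas j ζ k i)
    (k : ZMod N) :
    (V k) ^ p = V (-((p : ZMod N) * k)) := by
  rw [hV, hV, sum_pow_char]
  refine Finset.sum_congr rfl fun i _ => ?_
  rw [mul_pow, hv, cas_pow_char p hjp hζ]

/-- Frobenius conjugacy symmetry of the finite-field Hartley transform:
in characteristic `p` (odd prime), with `j^p = -j`, if `v` takes values in the
prime field (`v i ^ p = v i`) and `V` is the FFHT of `v`, then
`(V k)^p = V (-p·k)`. -/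
theorem ffht_frobenius_symmetry {F : Type*} [Field F] (p N : ℕ) [Fact p.Prime]
    (hodd : Odd p) [CharP F p] [NeZero N]
    (j ζ : F) (h2 : IsUnit (2 : F)) (hj : j ^ 2 = -1) (hjp : j ^ p = -j)
    (hζ : orderOf ζ = N) (v V : ZMod N → F)
    (hv : ∀ i : ZMod N, v i ^ p = v i)
    (hV : ∀ k : ZMod N, V k = ∑ i : ZMod N, v i * cas j ζ k i)
    (k : ZMod N) :
    (V k) ^ p = V (-((p : ZMod N) * k)) :=
  ffht_frobenius_symmetry_general p N j ζ hjp hζ v V hv hV k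
end

section
/- A prime-field-valued signal is completely determined by the FFFT coefficients indexed by one representative of each p-cyclotomic coset (so only the coset leaders need to be transmitted): assume F has characteristic p (p prime) and that (N : F) is invertible in F. Let S ⊆ ZMod N be a set meeting every orbit of the multiplication-by-p action on ZMod N (i.e., for every k ∈ ZMod N there exist s ∈ S and n ∈ ℕ with s = p^n·k in ZMod N). If v, w : ZMod N → F satisfy v_i^p = v_i and w_i^p = w_i for all i, and their FFFTs agree on S, then v = w. -/
/-!
The Fourier sum of a signal with values fixed by the Frobenius `x ↦ x ^ p` satisfies
`V (p ^ n * k) = V k ^ (p ^ n)`, because raising to the `p ^ n`-th power is additive and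
multiplies the frequency of each character value by `p ^ n`. Since this power map is injective
on a field, agreement of two transforms at one frequency of a `p`-cyclotomic coset forces
agreement on the whole coset, hence everywhere; Fourier inversion, available because `N` is
invertible, then recovers the signals.
-/

open Finset

namespace AddChar

variable {R F : Type*} [CommRing R] [Fintype R] [CommRing F]

def fourierSum (ψ : AddChar R F) (u : R → F) (k : R) : F :=
  ∑ i, u i * ψ (k * i)

lemma fourierSum_pow_expChar_pow (p : ℕ) [ExpChar F p] (ψ : AddChar R F) {u : R → F}
    (hu : ∀ i, u i ^ p = u i) (n : ℕ) (k : R) :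
    fourierSum ψ u k ^ p ^ n = fourierSum ψ u ((p : R) ^ n * k) := by
  have hu_iter (i : R) : u i ^ p ^ n = u i := by
    induction n with
    | zero => simp
    | succ n ih => rw [pow_succ, pow_mul, ih, hu]
  simp only [fourierSum, sum_pow_char_pow, mul_pow, hu_iter, ← map_nsmul_eq_pow, nsmul_eq_mul,
    Nat.cast_pow, mul_assoc]

lemma fourierSum_eq_of_eq_mul_expChar_pow (p : ℕ) [IsReduced F] [ExpChar F p]
    (ψ : AddChar R F) {u w : R → F} (hu : ∀ i, u i ^ p = u i) (hw : ∀ i, w i ^ p = w i)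
    (n : ℕ) (k : R) (h : fourierSum ψ u ((p : R) ^ n * k) = fourierSum ψ w ((p : R) ^ n * k)) :
    fourierSum ψ u k = fourierSum ψ w k := by
  apply iterateFrobenius_inj F p n
  simpa only [iterateFrobenius_def, fourierSum_pow_expChar_pow p ψ hu,
    fourierSum_pow_expChar_pow p ψ hw] using h

lemma sum_mul_fourierSum [DecidableEq R] [IsDomain F] {ψ : AddChar R F} (hψ : ψ.IsPrimitive)
    (u : R → F) (j : R) :
    ∑ k, ψ (-(k * j)) * fourierSum ψ u k = Fintype.card R * u j := by
  have hψ_mul (k i : R) : ψ (-(k * j)) * ψ (k * i) = ψ (k * (i - j)) := by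
    rw [← map_add_eq_mul]; ring_nf
  calc ∑ k, ψ (-(k * j)) * fourierSum ψ u k
      = ∑ i, u i * ∑ k, ψ (k * (i - j)) := by
        simp only [fourierSum, mul_sum]
        rw [sum_comm]
        refine sum_congr rfl fun i _ => sum_congr rfl fun k _ => ?_
        rw [← hψ_mul]; ring
    _ = Fintype.card R * u j := by
        simp [sum_mulShift _ hψ, sub_eq_zero, apply_ite, mul_comm]

lemma fourierSum_injective [IsDomain F] {ψ : AddChar R F} (hψ : ψ.IsPrimitive)
    (hR : IsUnit (Fintype.card R : F)) : Function.Injective (fourierSum ψ) := by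
  classical
  intro u w h
  funext j
  apply hR.mul_left_cancel
  rw [← sum_mul_fourierSum hψ, ← sum_mul_fourierSum hψ, h]

end AddChar

/-- A prime-field-valued signal is completely determined by the FFFT coefficients
indexed by one representative of each `p`-cyclotomic coset: if the FFFTs of two
prime-field-valued signals agree on a set `S` meeting every orbit of the
multiplication-by-`p` action on `ZMod N`, the signals are equal. -/
theorem ffft_determined_by_coset_leaders {F : Type*} [Field F] (p N : ℕ)
    [Fact p.Prime] [CharP F p] [NeZero N]
    (ζ : F) (hζ : orderOf ζ = N) (hNunit : IsUnit (N : F))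
    (S : Set (ZMod N))
    (hS : ∀ k : ZMod N, ∃ s ∈ S, ∃ n : ℕ, s = (p : ZMod N) ^ n * k)
    (v w : ZMod N → F)
    (hv : ∀ i : ZMod N, v i ^ p = v i)
    (hw : ∀ i : ZMod N, w i ^ p = w i)
    (hagree : ∀ s ∈ S, ∑ i : ZMod N, v i * ζ ^ (s * i).val
      = ∑ i : ZMod N, w i * ζ ^ (s * i).val) :
    v = w := by
  have hζ' : IsPrimitiveRoot ζ N := hζ ▸ IsPrimitiveRoot.orderOf ζ
  let ψ := AddChar.zmodChar N hζ'.pow_eq_one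
  have hψ : ψ.IsPrimitive := AddChar.zmodChar_primitive_of_primitive_root N hζ'
  refine AddChar.fourierSum_injective hψ (by rwa [ZMod.card]) (funext fun k => ?_)
  obtain ⟨s, hs, n, rfl⟩ := hS k
  exact AddChar.fourierSum_eq_of_eq_mul_expChar_pow p ψ hv hw n k (hagree _ hs)
end

section
/- Converse Frobenius characterization of spectra of prime-field-valued signals: assume F has characteristic p (p prime) and that (N : F) is invertible in F, and let V : ZMod N → F satisfy V_{p·k} = (V_k)^p for all k ∈ ZMod N. Then the inverse FFFT v given by v_i = (N : F)⁻¹ · Σ_{k ∈ ZMod N} V_k · ζ^{−ki} satisfies v_i^p = v_i for all i (i.e., v takes values in the prime field GF(p)). -/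
/-!
The Frobenius `x ↦ x ^ p` is additive and fixes `(N : F)⁻¹`, and it turns the `k`-th term
`V k * ζ ^ (-k i)` of the inverse transform into `V (p k) * ζ ^ (-(p k) i)`. Since `N` is
invertible in `F`, `p` is prime to `N`, so `k ↦ p k` permutes `ZMod N` and the sum is unchanged.
-/

open Finset

theorem natCast_pow_char {R : Type*} [CommSemiring R] (p : ℕ) [Fact p.Prime] [CharP R p]
    (n : ℕ) : (n : R) ^ p = n := by
  simpa only [frobenius_def] using map_natCast (frobenius R p) n

theorem coprime_of_isUnit_natCast {R : Type*} [Semiring R] [Nontrivial R] (p : ℕ)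
    [Fact p.Prime] [CharP R p] {n : ℕ} (h : IsUnit (n : R)) : p.Coprime n :=
  (Nat.Prime.coprime_iff_not_dvd Fact.out).2 fun hpn =>
    not_isUnit_zero ((CharP.cast_eq_zero_iff R p n).2 hpn ▸ h)

theorem pow_val_pow_eq_pow_val_natCast_mul {M : Type*} [Monoid M] {N : ℕ} [NeZero N]
    {ζ : M} (hζ : ζ ^ N = 1) (a : ZMod N) (n : ℕ) :
    (ζ ^ a.val) ^ n = ζ ^ ((n : ZMod N) * a).val := by
  rw [← pow_mul, pow_eq_pow_mod _ hζ, pow_eq_pow_mod ((n : ZMod N) * a).val hζ,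
    (ZMod.natCast_eq_natCast_iff' _ _ N).1]
  simp [mul_comm]

theorem sum_mul_pow_val_pow_char {F : Type*} [CommRing F] (p : ℕ) [Fact p.Prime] [CharP F p]
    {N : ℕ} [NeZero N] {ζ : F} (hζ : ζ ^ N = 1) (W : ZMod N → F) (i : ZMod N) :
    (∑ k, W k * ζ ^ (-(k * i)).val) ^ p = ∑ k, W k ^ p * ζ ^ (-((p : ZMod N) * k * i)).val := by
  rw [sum_pow_char]
  refine sum_congr rfl fun k _ => ?_
  rw [mul_pow, pow_val_pow_eq_pow_val_natCast_mul hζ, mul_neg, mul_assoc]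

/-- Converse Frobenius characterization of spectra of prime-field-valued signals:
in characteristic `p`, if `V (p·k) = (V k)^p` for all `k` and `v` is the inverse
FFFT of `V`, then `v` takes values in the prime field (`v i ^ p = v i`). -/
theorem ffft_converse_frobenius {F : Type*} [Field F] (p N : ℕ) [Fact p.Prime]
    [CharP F p] [NeZero N]
    (ζ : F) (hζ : orderOf ζ = N) (hNunit : IsUnit (N : F))
    (V v : ZMod N → F)
    (hV : ∀ k : ZMod N, V ((p : ZMod N) * k) = (V k) ^ p)
    (hv : ∀ i : ZMod N, v i = (N : F)⁻¹ * ∑ k : ZMod N, V k * ζ ^ (-(k * i)).val)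
    (i : ZMod N) :
    v i ^ p = v i := by
  have hζN : ζ ^ N = 1 := hζ ▸ pow_orderOf_eq_one ζ
  have hp : IsUnit (p : ZMod N) :=
    (ZMod.isUnit_iff_coprime p N).2 (coprime_of_isUnit_natCast p hNunit)
  rw [hv, mul_pow, inv_pow, natCast_pow_char, sum_mul_pow_val_pow_char p hζN]
  congr 1
  simp_rw [← hV]
  exact Equiv.sum_comp hp.unit.mulLeft fun k => V k * ζ ^ (-(k * i)).val
end

section
/- The number of p-cyclotomic cosets equals the number of irreducible factors of X^N − 1: let p be a prime and N ≥ 1 with p not dividing N. Then the number of distinct monic irreducible factors of X^N − 1 in (ZMod p)[X] equals the number of orbits of the multiplication-by-p action on ZMod N. -/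
/-!
Over a splitting field `L` of `X ^ N - 1` choose a primitive `N`-th root of unity `ζ`. Every monic
irreducible factor of `X ^ N - 1` over `𝔽_q` is the minimal polynomial of some `ζ ^ k`, and two
such minimal polynomials agree iff the roots are conjugate under `Gal(L/𝔽_q)`, which is generated
by `x ↦ x ^ q`; for `ζ ^ a` and `ζ ^ b` this says `a = q ^ n * b` in `ZMod N`. So
`k ↦ minpoly (ζ ^ k)` and `k ↦ (q-cyclotomic coset of k)` have the same fibres, hence ranges of
the same size.
-/

open Polynomial

theorem Set.ncard_range_eq_ncard_range_of_eq_iff {α β γ : Type*} {f : α → β} {g : α → γ}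
    (h : ∀ a b, f a = f b ↔ g a = g b) : (Set.range f).ncard = (Set.range g).ncard := by
  have hker : Setoid.ker f = Setoid.ker g := Setoid.ext h
  rw [← Nat.card_coe_set_eq, ← Nat.card_coe_set_eq,
    ← Nat.card_congr (Setoid.quotientKerEquivRange f),
    ← Nat.card_congr (Setoid.quotientKerEquivRange g), hker]

theorem setOf_pow_mul_eq_setOf_pow_mul_iff {M : Type*} [CommMonoid M] {u : M}
    (hu : IsOfFinOrder u) {a b : M} :
    {x | ∃ n : ℕ, x = u ^ n * a} = {x | ∃ n : ℕ, x = u ^ n * b} ↔ ∃ n : ℕ, a = u ^ n * b := by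
  constructor
  · intro h
    have ha : a ∈ {x | ∃ n : ℕ, x = u ^ n * a} := ⟨0, by rw [pow_zero, one_mul]⟩
    rwa [h] at ha
  · rintro ⟨n, rfl⟩
    obtain ⟨m, hm⟩ : ∃ m, u ^ m * u ^ n = 1 :=
      ⟨n * (orderOf (u ^ n) - 1), by
        rw [pow_mul, pow_sub_one_mul hu.pow.orderOf_pos.ne', pow_orderOf_eq_one]⟩
    ext x
    constructor
    · rintro ⟨k, rfl⟩
      exact ⟨k + n, by rw [pow_add, mul_assoc]⟩
    · rintro ⟨k, rfl⟩
      exact ⟨k + m, by rw [pow_add, ← mul_assoc, mul_assoc (u ^ k), hm, mul_one]⟩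

theorem IsPrimitiveRoot.pow_eq_pow_iff_natCast_eq {M : Type*} [CommMonoid M] {ζ : M} {N : ℕ}
    [NeZero N] (hζ : IsPrimitiveRoot ζ N) {s t : ℕ} : ζ ^ s = ζ ^ t ↔ (s : ZMod N) = t := by
  rw [(hζ.isOfFinOrder (NeZero.ne N)).pow_eq_pow_iff_modEq, ← hζ.eq_orderOf,
    ZMod.natCast_eq_natCast_iff]

theorem setOf_monic_irreducible_dvd_X_pow_sub_one_eq_range {K L : Type*} [Field K] [Field L]
    [Algebra K L] {N : ℕ} [NeZero N] {ζ : L} (hζ : IsPrimitiveRoot ζ N) :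
    {f : K[X] | f.Monic ∧ Irreducible f ∧ f ∣ X ^ N - 1} =
      Set.range fun k : ZMod N => minpoly K (ζ ^ k.val) := by
  ext f
  constructor
  · rintro ⟨hmonic, hirr, hdvd⟩
    have hsplits : ((X ^ N - 1 : K[X]).map (algebraMap K L)).Splits := by
      rw [Polynomial.map_sub, Polynomial.map_pow, map_X, Polynomial.map_one,
        X_pow_sub_one_eq_prod (NeZero.pos N) hζ]
      exact Splits.prod fun _ _ => Splits.X_sub_C _
    obtain ⟨α, hα⟩ := (hsplits.of_dvd (map_ne_zero (X_pow_sub_C_ne_zero (NeZero.pos N) 1))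
      (map_dvd _ hdvd)).exists_eval_eq_zero
        (by rw [degree_map]; exact (degree_pos_of_irreducible hirr).ne')
    have hαf : aeval α f = 0 := by rwa [aeval_def, eval₂_eq_eval_map]
    have hαN : α ^ N = 1 := by
      simpa [sub_eq_zero] using aeval_eq_zero_of_dvd_aeval_eq_zero hdvd hαf
    obtain ⟨i, hiN, rfl⟩ := hζ.eq_pow_of_pow_eq_one hαN
    refine ⟨i, ?_⟩
    change minpoly K (ζ ^ (i : ZMod N).val) = f
    rw [ZMod.val_cast_of_lt hiN, minpoly.eq_of_irreducible_of_monic hirr hαf hmonic]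
  · rintro ⟨k, rfl⟩
    have hint : IsIntegral K (ζ ^ k.val) :=
      (hζ.isIntegral (NeZero.pos N)).pow _ |>.tower_top
    refine ⟨minpoly.monic hint, minpoly.irreducible hint, minpoly.dvd K _ ?_⟩
    rw [map_sub, map_pow, aeval_X, map_one, ← pow_mul, mul_comm, pow_mul, hζ.pow_eq_one,
      one_pow, sub_self]

namespace FiniteField

theorem neZero_natCast_of_coprime {F : Type*} [Field F] [Fintype F] {N : ℕ}
    (h : (Fintype.card F).Coprime N) : NeZero (N : F) := by
  have hF := (Nat.isCoprime_iff_coprime.mpr h).map (Int.castRingHom F)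
  simp only [eq_intCast, Int.cast_natCast, cast_card_eq_zero, isCoprime_zero_left] at hF
  exact ⟨hF.ne_zero⟩

variable {K L : Type*} [Field K] [Fintype K] [Field L] [Finite L] [Algebra K L]

theorem minpoly_eq_minpoly_iff {x y : L} :
    minpoly K x = minpoly K y ↔ ∃ n : ℕ, x = y ^ Fintype.card K ^ n := by
  have hfrob (n : ℕ) : ⇑(frobeniusAlgEquivOfAlgebraic K L ^ n) = (· ^ Fintype.card K ^ n) := by
    rw [AlgEquiv.coe_pow, coe_frobeniusAlgEquivOfAlgebraic_iterate]
  rw [Normal.minpoly_eq_iff_mem_orbit]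
  constructor
  · rintro ⟨σ, rfl⟩
    obtain ⟨n, rfl⟩ := (bijective_frobeniusAlgEquivOfAlgebraic_pow K L).2 σ
    exact ⟨n, congrFun (hfrob n) y⟩
  · rintro ⟨n, rfl⟩
    exact ⟨frobeniusAlgEquivOfAlgebraic K L ^ n, congrFun (hfrob n) y⟩

theorem minpoly_pow_val_eq_minpoly_pow_val_iff {N : ℕ} [NeZero N] {ζ : L}
    (hζ : IsPrimitiveRoot ζ N) {a b : ZMod N} :
    minpoly K (ζ ^ a.val) = minpoly K (ζ ^ b.val) ↔
      ∃ n : ℕ, a = (Fintype.card K : ZMod N) ^ n * b := by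
  rw [minpoly_eq_minpoly_iff]
  refine exists_congr fun n => ?_
  rw [← pow_mul, hζ.pow_eq_pow_iff_natCast_eq]
  push_cast
  rw [ZMod.natCast_zmod_val, ZMod.natCast_zmod_val, mul_comm]

theorem ncard_monic_irreducible_dvd_X_pow_sub_one {F : Type*} [Field F] [Fintype F]
    {N : ℕ} (hN : (Fintype.card F).Coprime N) :
    {f : F[X] | f.Monic ∧ Irreducible f ∧ f ∣ X ^ N - 1}.ncard
      = {O : Set (ZMod N) | ∃ k : ZMod N,
          O = {x : ZMod N | ∃ n : ℕ, x = (Fintype.card F : ZMod N) ^ n * k}}.ncard := by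
  have := neZero_natCast_of_coprime hN
  have : NeZero N := .of_neZero_natCast F
  let L := CyclotomicField N F
  have : Module.Finite F L := IsCyclotomicExtension.finite {N} F L
  have : Finite L := Module.finite_of_finite F
  have hζ := IsCyclotomicExtension.zeta_spec N F L
  have hq : IsOfFinOrder (Fintype.card F : ZMod N) := by
    simpa using Units.isOfFinOrder_val.mpr (isOfFinOrder_of_finite (ZMod.unitOfCoprime _ hN))
  have hcosets : {O : Set (ZMod N) | ∃ k : ZMod N,
      O = {x : ZMod N | ∃ n : ℕ, x = (Fintype.card F : ZMod N) ^ n * k}} =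
      Set.range fun k : ZMod N => {x : ZMod N | ∃ n : ℕ, x = (Fintype.card F : ZMod N) ^ n * k} :=
    Set.ext fun _ => exists_congr fun _ => eq_comm
  rw [setOf_monic_irreducible_dvd_X_pow_sub_one_eq_range hζ, hcosets]
  refine Set.ncard_range_eq_ncard_range_of_eq_iff fun a b => ?_
  rw [minpoly_pow_val_eq_minpoly_pow_val_iff hζ, setOf_pow_mul_eq_setOf_pow_mul_iff hq]

end FiniteField

theorem irreducible_factors_eq_coset_count_general (p N : ℕ) (hp : p.Prime)
    (hpN : ¬ p ∣ N) :
    {f : Polynomial (ZMod p) | f.Monic ∧ Irreducible f ∧ f ∣ (X ^ N - 1)}.ncard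
      = {O : Set (ZMod N) | ∃ k : ZMod N,
          O = {x : ZMod N | ∃ n : ℕ, x = (p : ZMod N) ^ n * k}}.ncard := by
  have : Fact p.Prime := ⟨hp⟩
  have hcoprime : (Fintype.card (ZMod p)).Coprime N := by
    rw [ZMod.card]
    exact hp.coprime_iff_not_dvd.mpr hpN
  simpa only [ZMod.card] using FiniteField.ncard_monic_irreducible_dvd_X_pow_sub_one hcoprime

/-- The number of `p`-cyclotomic cosets equals the number of distinct monic
irreducible factors of `X^N - 1` over `GF(p)`. -/
theorem irreducible_factors_eq_coset_count (p N : ℕ) (hp : p.Prime) (hN : 1 ≤ N)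
    (hpN : ¬ p ∣ N) :
    {f : Polynomial (ZMod p) | f.Monic ∧ Irreducible f ∧ f ∣ (X ^ N - 1)}.ncard
      = {O : Set (ZMod N) | ∃ k : ZMod N,
          O = {x : ZMod N | ∃ n : ℕ, x = (p : ZMod N) ^ n * k}}.ncard :=
  irreducible_factors_eq_coset_count_general p N hp hpN
end
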